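/- arXiv:2206.13893 — 3 statements merged into one kernel-verified Lean document; each statement's English description precedes it below -/
import Mathlib

section
/- For real parameters $a>0$ and any real $\xi$, the Fourier transform $\int_{-\infty}^{\infty} e^{-i\xi x} (1-\tanh^2 x)^a\, dx$ equals $2^{2a-1} B(a + i\xi/2,\ a - i\xi/2)$, where $B$ denotes the Beta function extended to complex arguments with positive real part. -/
open MeasureTheory Finset

noncomputable section

/-- Pochhammer symbol `(a)_n` for real `a`. -/
def pochR (a : ℝ) (n : ℕ) : ℝ := ∏ k ∈ Finset.range n, (a + k)

/-- Pochhammer symbol `(a)_n` for complex `a`. -/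
def pochC (a : ℂ) (n : ℕ) : ℂ := ∏ k ∈ Finset.range n, (a + k)

/-- Gegenbauer polynomial `C_n^{(λ)}(x)` via the terminating `₂F₁` representation. -/
def Geg (n : ℕ) (lam : ℝ) (x : ℝ) : ℝ :=
  pochR (2 * lam) n / (Nat.factorial n) *
    ∑ l ∈ Finset.range (n + 1),
      pochR (-(n : ℝ)) l * pochR ((n : ℝ) + 2 * lam) l /
        (pochR (lam + 1 / 2) l * (Nat.factorial l)) * ((1 - x) / 2) ^ l

/-- Terminating generalized hypergeometric sum `₃F₂(-n, a₂, a₃; b₁, b₂; 1)`. -/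
def F32 (n : ℕ) (a2 a3 b1 b2 : ℂ) : ℂ :=
  ∑ l ∈ Finset.range (n + 1),
    pochC (-(n : ℂ)) l * pochC a2 l * pochC a3 l /
      (pochC b1 l * pochC b2 l * (Nat.factorial l))

/-- Beta function for complex arguments. -/
def BetaC (a b : ℂ) : ℂ := Complex.Gamma a * Complex.Gamma b / Complex.Gamma (a + b)

/-- Continuous Hahn polynomial `p_n(x; a, b, c, d)`. -/
def hahn (n : ℕ) (x a b c d : ℂ) : ℂ :=
  Complex.I ^ n * pochC (a + c) n * pochC (a + d) n / (Nat.factorial n) *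
    F32 n ((n : ℂ) + a + b + c + d - 1) (a + Complex.I * x) (a + c) (a + d)

/-!
Substitute `u = (1 + tanh x) / 2`, which maps `ℝ` bijectively onto `(0, 1)` with
`du = sech² x / 2 dx`. Since `sech² x = 4 u (1 - u)` and `e^{2x} = u / (1 - u)`, the integrand
`e^{-iξx} sech^{2a} x dx` becomes `2^{2a-1} u^{a - iξ/2 - 1} (1 - u)^{a + iξ/2 - 1} du`, and Euler's
Beta integral gives `Γ(a + iξ/2) Γ(a - iξ/2) / Γ(2a)`.
-/

theorem Real.hasDerivAt_tanh (x : ℝ) : HasDerivAt Real.tanh (1 - Real.tanh x ^ 2) x := by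
  have hcosh : Real.cosh x ≠ 0 := (Real.cosh_pos x).ne'
  have h := (Real.hasDerivAt_sinh x).div (Real.hasDerivAt_cosh x) hcosh
  rw [show Real.sinh / Real.cosh = Real.tanh from
    funext fun y => (Real.tanh_eq_sinh_div_cosh (x := y)).symm] at h
  refine h.congr_deriv ?_
  rw [Real.tanh_eq_sinh_div_cosh]
  field_simp

/-- The logistic function at `2 * x`: `logistic x = 1 / (1 + exp (-2 * x))`. -/
def logistic (x : ℝ) : ℝ := (1 + Real.tanh x) / 2

theorem hasDerivAt_logistic (x : ℝ) :
    HasDerivAt logistic ((1 - Real.tanh x ^ 2) / 2) x :=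
  ((Real.hasDerivAt_tanh x).const_add 1).div_const 2

theorem logistic_injective : Function.Injective logistic := fun x y h =>
  Real.tanh_injective (by simpa [logistic] using h)

theorem range_logistic : Set.range logistic = Set.Ioo 0 1 := by
  rw [show logistic = (fun t => (1 + t) / 2) ∘ Real.tanh from rfl, Set.range_comp,
    ← Set.image_univ, Real.tanh_bijOn.image_eq]
  ext u
  constructor
  · rintro ⟨t, ⟨ht₁, ht₂⟩, rfl⟩
    constructor <;> linarith
  · rintro ⟨hu₀, hu₁⟩
    exact ⟨2 * u - 1, ⟨by linarith, by linarith⟩, by ring⟩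

theorem logistic_mem_Ioo (x : ℝ) : logistic x ∈ Set.Ioo 0 1 :=
  range_logistic ▸ Set.mem_range_self x

theorem one_sub_tanh_sq_eq (x : ℝ) :
    1 - Real.tanh x ^ 2 = 4 * logistic x * (1 - logistic x) := by
  rw [logistic]; ring

theorem log_logistic_sub_log_one_sub (x : ℝ) :
    Real.log (logistic x) - Real.log (1 - logistic x) = 2 * x := by
  have hratio : logistic x / (1 - logistic x) = Real.exp (2 * x) := by
    rw [logistic, Real.tanh_eq, Real.exp_neg, two_mul, Real.exp_add]
    field_simp
    ring
  obtain ⟨hpos, hlt⟩ := logistic_mem_Ioo x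
  rw [← Real.log_div hpos.ne' (sub_ne_zero.2 hlt.ne'), hratio, Real.log_exp]

theorem integral_deriv_logistic_smul {E : Type*} [NormedAddCommGroup E] [NormedSpace ℝ E]
    (f : ℝ → E) :
    ∫ x, ((1 - Real.tanh x ^ 2) / 2) • f (logistic x) = ∫ u in Set.Ioo 0 1, f u := by
  have h := integral_image_eq_integral_abs_deriv_smul MeasurableSet.univ
    (fun x _ => (hasDerivAt_logistic x).hasDerivWithinAt) logistic_injective.injOn f
  rw [Set.image_univ, range_logistic, Measure.restrict_univ] at h
  rw [h]
  congr 1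
  ext x
  rw [abs_of_pos (by linarith [Real.tanh_sq_lt_one x])]

theorem Complex.betaIntegral_eq_setIntegral_Ioo (u v : ℂ) :
    betaIntegral u v = ∫ x in Set.Ioo (0 : ℝ) 1, (x : ℂ) ^ (u - 1) * (1 - (x : ℂ)) ^ (v - 1) := by
  rw [betaIntegral, intervalIntegral.integral_of_le zero_le_one, integral_Ioc_eq_integral_Ioo]

theorem Complex.ofReal_cpow_eq_exp {r : ℝ} (hr : 0 < r) (z : ℂ) :
    (r : ℂ) ^ z = Complex.exp (Real.log r * z) := by
  rw [Complex.cpow_def_of_ne_zero (Complex.ofReal_ne_zero.2 hr.ne'), Complex.ofReal_log hr.le]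

open Complex in
theorem exp_mul_rpow_eq_smul_cpow_mul_cpow {p x : ℝ} (hp : p ∈ Set.Ioo 0 1)
    (hx : Real.log p - Real.log (1 - p) = 2 * x) (a ξ : ℝ) :
    exp (-(I * ξ * x)) * (((4 * p * (1 - p)) ^ a : ℝ) : ℂ) =
      ((2 ^ (2 * a - 1) : ℝ) : ℂ) * ((2 * p * (1 - p)) •
        ((p : ℂ) ^ ((a : ℂ) - I * ξ / 2 - 1) * (1 - (p : ℂ)) ^ ((a : ℂ) + I * ξ / 2 - 1))) := by
  obtain ⟨hp₀, hp₁⟩ := hp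
  have hq : 0 < 1 - p := by linarith
  have hlog₄ : Real.log 4 = 2 * Real.log 2 := by
    rw [show (4 : ℝ) = 2 ^ 2 by norm_num, Real.log_pow, Nat.cast_ofNat]
  have hjac : ((2 * p * (1 - p) : ℝ) : ℂ) = exp (Real.log (2 * p * (1 - p))) := by
    rw [← Complex.ofReal_exp, Real.exp_log (by positivity)]
  rw [Complex.real_smul, hjac, show (1 : ℂ) - p = ((1 - p : ℝ) : ℂ) by push_cast; rfl,
    Complex.ofReal_cpow_eq_exp hp₀, Complex.ofReal_cpow_eq_exp hq,
    Complex.ofReal_cpow (by positivity), Complex.ofReal_cpow_eq_exp (by positivity),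
    Complex.ofReal_cpow zero_le_two, Complex.ofReal_cpow_eq_exp two_pos]
  simp only [← Complex.exp_add]
  -- both exponents are linear combinations of `log 2`, `log p`, `log (1 - p)` and `x`
  congr 1
  rw [Real.log_mul (by positivity) hq.ne', Real.log_mul (by positivity) hp₀.ne',
    Real.log_mul (by positivity) hq.ne', Real.log_mul two_ne_zero hp₀.ne', hlog₄]
  have hx' : (Real.log p : ℂ) - Real.log (1 - p) = 2 * x := by exact_mod_cast hx
  push_cast
  linear_combination (I * ξ / 2) * hx'

open Complex in
theorem stmt_0 (a : ℝ) (ha : 0 < a) (ξ : ℝ) :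
    ∫ x : ℝ, Complex.exp (-(Complex.I * (ξ : ℂ) * (x : ℂ))) *
        (((1 - Real.tanh x ^ 2) ^ a : ℝ) : ℂ)
      = (((2 : ℝ) ^ (2 * a - 1) : ℝ) : ℂ) *
        BetaC ((a : ℂ) + Complex.I * (ξ : ℂ) / 2) ((a : ℂ) - Complex.I * (ξ : ℂ) / 2) := by
  have hintegrand (x : ℝ) := exp_mul_rpow_eq_smul_cpow_mul_cpow
    (logistic_mem_Ioo x) (log_logistic_sub_log_one_sub x) a ξ
  set s : ℂ := (a : ℂ) - I * ξ / 2
  set t : ℂ := (a : ℂ) + I * ξ / 2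
  have hs : 0 < s.re := by simpa [s] using ha
  have ht : 0 < t.re := by simpa [t] using ha
  calc ∫ x : ℝ, exp (-(I * ξ * x)) * (((1 - Real.tanh x ^ 2) ^ a : ℝ) : ℂ)
      = ∫ x : ℝ, ((2 ^ (2 * a - 1) : ℝ) : ℂ) * (((1 - Real.tanh x ^ 2) / 2) •
          ((logistic x : ℂ) ^ (s - 1) * (1 - (logistic x : ℂ)) ^ (t - 1))) := by
        congr 1
        ext x
        rw [one_sub_tanh_sq_eq, hintegrand x]
        congr 2
        ring
    _ = ((2 ^ (2 * a - 1) : ℝ) : ℂ) * betaIntegral s t := by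
        rw [integral_const_mul,
          integral_deriv_logistic_smul fun u : ℝ => (u : ℂ) ^ (s - 1) * (1 - (u : ℂ)) ^ (t - 1),
          betaIntegral_eq_setIntegral_Ioo]
    _ = ((2 ^ (2 * a - 1) : ℝ) : ℂ) * BetaC t s := by
        rw [BetaC, Gamma_mul_Gamma_eq_betaIntegral ht hs, betaIntegral_symm,
          mul_div_cancel_left₀ _ (Gamma_ne_zero_of_re_pos (by simp only [add_re]; linarith))]
end
end

section
/- For $a > 0$, $\mu > -1/2$, $n$ a nonnegative integer, and $\xi \in \mathbb{R}$, the Fourier transform of $f_1(x) = (1-\tanh^2 x)^a C_n^{(\mu)}(\tanh x)$ is $\mathcal{F}(f_1)(\xi) = \frac{2^{2a-1}(2\mu)_n}{n!}\, B\!\left(a+\tfrac{i\xi}{2}, a-\tfrac{i\xi}{2}\right)\, {}_3F_2\!\left(\begin{smallmatrix} -n,\ n+2\mu,\ a+\frac{i\xi}{2} \\ 2a,\ \mu+\frac12 \end{smallmatrix}\;\middle|\;1\right)$. -/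
open MeasureTheory Finset

noncomputable section

/-!
Substituting `tanh x = 2u - 1` maps `ℝ` onto `(0, 1)` with `dx = du / (2u(1-u))`,
`1 - tanh² x = 4u(1-u)` and `e^{-iξx} = u^{-iξ/2} (1-u)^{iξ/2}`, so the transform becomes
`2^{2a-1} ∫₀¹ u^{p-1} (1-u)^{q-1} C_n^{(μ)}(2u-1) du` with `p, q = a ∓ iξ/2`.
The `₂F₁` series of `C_n^{(μ)}(2u-1)` is a polynomial in `1 - u`, and its terms integrate to
`B(p, q + l) = B(p, q) (q)_l / (2a)_l`, which are the terms of the `₃F₂`.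
-/
lemma ofReal_pochR (a : ℝ) (n : ℕ) : ((pochR a n : ℝ) : ℂ) = pochC a n := by
  simp [pochR, pochC]

lemma pochC_eq_eval_ascPochhammer (z : ℂ) (l : ℕ) :
    pochC z l = (ascPochhammer ℂ l).eval z := by
  induction l with
  | zero => simp [pochC]
  | succ l ih => simp [pochC, Finset.prod_range_succ, ascPochhammer_succ_right, ← ih]

lemma Complex.re_add_natCast_pos {z : ℂ} (hz : 0 < z.re) (l : ℕ) : 0 < (z + l).re := by
  simpa using add_pos_of_pos_of_nonneg hz l.cast_nonneg

lemma Complex.ne_neg_natCast_of_re_pos {z : ℂ} (hz : 0 < z.re) (k : ℕ) : z ≠ -k := by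
  rintro rfl
  simp only [Complex.neg_re, Complex.natCast_re] at hz
  linarith [(Nat.cast_nonneg k : (0:ℝ) ≤ k)]

lemma one_sub_ofReal_ne_zero {u : ℝ} (hu : u < 1) : 1 - (u : ℂ) ≠ 0 :=
  sub_ne_zero.2 (by exact_mod_cast hu.ne')

lemma Complex.Gamma_add_nat_eq_pochC_mul {z : ℂ} (hz : ∀ k : ℕ, z ≠ -k) (l : ℕ) :
    Complex.Gamma (z + l) = pochC z l * Complex.Gamma z := by
  rw [pochC_eq_eval_ascPochhammer, ← Complex.Gamma_add_nat_div_Gamma_eq z hz,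
    div_mul_cancel₀ _ (Complex.Gamma_ne_zero hz)]

lemma BetaC_comm (a b : ℂ) : BetaC a b = BetaC b a := by
  rw [BetaC, BetaC, mul_comm, add_comm]

lemma Complex.betaIntegral_add_nat {p q : ℂ} (hp : 0 < p.re) (hq : 0 < q.re) (l : ℕ) :
    Complex.betaIntegral p (q + l) = BetaC p q * pochC q l / pochC (p + q) l := by
  have hpq : 0 < (p + q).re := by simpa using add_pos hp hq
  have hΓ : Complex.Gamma (p + q + l) ≠ 0 :=
    Complex.Gamma_ne_zero_of_re_pos (Complex.re_add_natCast_pos hpq l)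
  have h := Complex.Gamma_mul_Gamma_eq_betaIntegral hp (Complex.re_add_natCast_pos hq l)
  rw [← add_assoc] at h
  rw [eq_div_of_mul_eq hΓ (by rw [mul_comm, ← h] :
      Complex.betaIntegral p (q + l) * _ = Complex.Gamma p * Complex.Gamma (q + l)), BetaC,
    Complex.Gamma_add_nat_eq_pochC_mul (Complex.ne_neg_natCast_of_re_pos hq),
    Complex.Gamma_add_nat_eq_pochC_mul (Complex.ne_neg_natCast_of_re_pos hpq)]
  ring

lemma Real.artanh_eq_half_log_sub_log {x : ℝ} (hx : x ∈ Set.Ioo (-1) 1) :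
    Real.artanh x = (Real.log (1 + x) - Real.log (1 - x)) / 2 := by
  rw [Real.artanh_eq_half_log (Set.Ioo_subset_Icc_self hx),
    Real.log_div (by linarith [hx.1]) (by linarith [hx.2])]
  ring

lemma Real.hasDerivAt_artanh {x : ℝ} (hx : x ∈ Set.Ioo (-1) 1) :
    HasDerivAt Real.artanh (1 - x ^ 2)⁻¹ x := by
  have h₁ : 0 < 1 + x := by linarith [hx.1]
  have h₂ : 0 < 1 - x := by linarith [hx.2]
  have hlog : HasDerivAt (fun y => (Real.log (1 + y) - Real.log (1 - y)) / 2)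
      (((1 + x)⁻¹ - -(1 - x)⁻¹) / 2) x :=
    ((((hasDerivAt_id' x).const_add 1).log h₁.ne').sub
      (((hasDerivAt_id' x).const_sub 1).log h₂.ne')).div_const 2 |>.congr_deriv (by ring)
  refine (hlog.congr_deriv ?_).congr_of_eventuallyEq
    (Filter.eventuallyEq_of_mem (isOpen_Ioo.mem_nhds hx)
      fun y hy => Real.artanh_eq_half_log_sub_log hy)
  rw [show 1 - x ^ 2 = (1 + x) * (1 - x) by ring]
  field_simp
  ring

lemma integral_eq_setIntegral_Ioo_artanh {E : Type*} [NormedAddCommGroup E] [NormedSpace ℝ E]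
    (g : ℝ → E) :
    ∫ x, g x = ∫ u in Set.Ioo 0 1, (2 * u * (1 - u))⁻¹ • g (Real.artanh (2 * u - 1)) := by
  have hmaps : ∀ u ∈ Set.Ioo (0:ℝ) 1, 2 * u - 1 ∈ Set.Ioo (-1) 1 := fun u hu =>
    ⟨by linarith [hu.1], by linarith [hu.2]⟩
  have himage : (fun u => Real.artanh (2 * u - 1)) '' Set.Ioo 0 1 = Set.univ := by
    refine Set.eq_univ_of_forall fun x => ?_
    obtain ⟨y, hy, rfl⟩ := Real.artanh_surjOn (Set.mem_univ x)
    exact ⟨(y + 1) / 2, ⟨by linarith [hy.1], by linarith [hy.2]⟩, by ring_nf⟩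
  have hinj : Set.InjOn (fun u => Real.artanh (2 * u - 1)) (Set.Ioo 0 1) :=
    fun u hu v hv h => by linarith [Real.artanh_injOn (hmaps u hu) (hmaps v hv) h]
  have hderiv : ∀ u ∈ Set.Ioo (0:ℝ) 1, HasDerivWithinAt (fun u => Real.artanh (2 * u - 1))
      (2 * u * (1 - u))⁻¹ (Set.Ioo 0 1) u := by
    intro u hu
    have := (Real.hasDerivAt_artanh (hmaps u hu)).comp u
      (((hasDerivAt_id' u).const_mul 2).sub_const 1)
    refine (this.congr_deriv ?_).hasDerivWithinAt
    have : u * (1 - u) ≠ 0 := by have := hu.1; have := hu.2; positivity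
    rw [show 1 - (2 * u - 1) ^ 2 = 2 * (2 * u * (1 - u)) by ring]
    field_simp
  rw [← setIntegral_univ, ← himage,
    integral_image_eq_integral_abs_deriv_smul measurableSet_Ioo hderiv hinj]
  refine setIntegral_congr_fun measurableSet_Ioo fun u hu => ?_
  rw [abs_of_pos (by have := hu.1; have := hu.2; positivity)]

lemma cexp_mul_artanh_two_mul_sub_one {u : ℝ} (hu : u ∈ Set.Ioo 0 1) (s : ℂ) :
    Complex.exp (s * Real.artanh (2 * u - 1))
      = (u : ℂ) ^ (s / 2) * (1 - (u : ℂ)) ^ (-s / 2) := by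
  have h₀ : 0 < u := hu.1
  have h₁ : 0 < 1 - u := by linarith [hu.2]
  have hlog : Real.artanh (2 * u - 1) = (Real.log u - Real.log (1 - u)) / 2 := by
    rw [Real.artanh_eq_half_log ⟨by linarith, by linarith⟩,
      show 1 + (2 * u - 1) = 2 * u by ring, show 1 - (2 * u - 1) = 2 * (1 - u) by ring,
      mul_div_mul_left _ _ two_ne_zero, Real.log_div h₀.ne' h₁.ne']
    ring
  rw [Complex.cpow_def_of_ne_zero (by exact_mod_cast h₀.ne'),
    Complex.cpow_def_of_ne_zero (by exact_mod_cast h₁.ne'), ← Complex.exp_add, hlog,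
    ← Complex.ofReal_log h₀.le, show (1 : ℂ) - u = ((1 - u : ℝ) : ℂ) by push_cast; rfl,
    ← Complex.ofReal_log h₁.le]
  push_cast
  ring_nf

lemma jacobian_mul_one_sub_sq_rpow {u : ℝ} (hu : u ∈ Set.Ioo 0 1) (a : ℝ) :
    (2 * u * (1 - u))⁻¹ * (1 - (2 * u - 1) ^ 2) ^ a
      = 2 ^ (2 * a - 1) * (u ^ (a - 1) * (1 - u) ^ (a - 1)) := by
  have h₀ : 0 < u := hu.1
  have h₁ : 0 < 1 - u := by linarith [hu.2]
  rw [show 1 - (2 * u - 1) ^ 2 = 2 ^ (2 : ℝ) * (u * (1 - u)) by norm_num; ring,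
    Real.mul_rpow (by positivity) (by positivity), ← Real.rpow_mul zero_le_two,
    ← Real.mul_rpow h₀.le h₁.le, Real.rpow_sub_one two_ne_zero,
    Real.rpow_sub_one (by positivity : u * (1 - u) ≠ 0)]
  field_simp

lemma jacobian_smul_fourierIntegrand_eq {u : ℝ} (hu : u ∈ Set.Ioo 0 1) (a ξ G : ℝ) :
    (2 * u * (1 - u))⁻¹ • (Complex.exp (-(Complex.I * ξ * (Real.artanh (2 * u - 1) : ℂ))) *
        (((1 - (2 * u - 1) ^ 2) ^ a * G : ℝ) : ℂ))
      = ((2 ^ (2 * a - 1) * G : ℝ) : ℂ) *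
        ((u : ℂ) ^ ((a : ℂ) - Complex.I * ξ / 2 - 1) *
          (1 - (u : ℂ)) ^ ((a : ℂ) + Complex.I * ξ / 2 - 1)) := by
  have h₀ : (u : ℂ) ≠ 0 := by exact_mod_cast hu.1.ne'
  have h₁ := one_sub_ofReal_ne_zero hu.2
  have hcast : (((1 - u) ^ (a - 1) : ℝ) : ℂ) = (1 - (u : ℂ)) ^ ((a - 1 : ℝ) : ℂ) := by
    rw [Complex.ofReal_cpow (by linarith [hu.2])]; push_cast; rfl
  rw [show (a : ℂ) - Complex.I * ξ / 2 - 1 = ((a - 1 : ℝ) : ℂ) + -(Complex.I * ξ) / 2 by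
      push_cast; ring,
    show (a : ℂ) + Complex.I * ξ / 2 - 1 = ((a - 1 : ℝ) : ℂ) + -(-(Complex.I * ξ)) / 2 by
      push_cast; ring,
    Complex.cpow_add _ _ h₀, Complex.cpow_add _ _ h₁, ← Complex.ofReal_cpow hu.1.le,
    ← hcast, Complex.real_smul, neg_mul_eq_neg_mul, cexp_mul_artanh_two_mul_sub_one hu]
  have := congrArg ((↑) : ℝ → ℂ) (jacobian_mul_one_sub_sq_rpow hu a)
  push_cast at this ⊢
  linear_combination (G * (u : ℂ) ^ (-(Complex.I * ξ) / 2) *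
    (1 - (u : ℂ)) ^ (-(-(Complex.I * ξ)) / 2)) * this

lemma setIntegral_Ioo_cpow_mul_one_sub_cpow (p q : ℂ) :
    ∫ u in Set.Ioo (0 : ℝ) 1, (u : ℂ) ^ (p - 1) * (1 - (u : ℂ)) ^ (q - 1)
      = Complex.betaIntegral p q := by
  rw [Complex.betaIntegral, intervalIntegral.integral_of_le zero_le_one,
    integral_Ioc_eq_integral_Ioo]

lemma integrableOn_Ioo_cpow_mul_one_sub_cpow {p q : ℂ} (hp : 0 < p.re) (hq : 0 < q.re) :
    IntegrableOn (fun u : ℝ => (u : ℂ) ^ (p - 1) * (1 - (u : ℂ)) ^ (q - 1)) (Set.Ioo 0 1) :=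
  ((intervalIntegrable_iff_integrableOn_Ioc_of_le zero_le_one).mp
    (Complex.betaIntegral_convergent hp hq)).mono_set Set.Ioo_subset_Ioc_self

theorem stmt_4_general (a μ : ℝ) (ha : 0 < a) (n : ℕ) (ξ : ℝ) :
    ∫ x : ℝ, Complex.exp (-(Complex.I * (ξ : ℂ) * (x : ℂ))) *
        ((((1 - Real.tanh x ^ 2) ^ a) * Geg n μ (Real.tanh x) : ℝ) : ℂ)
      = ((((2 : ℝ) ^ (2 * a - 1)) * pochR (2 * μ) n / (Nat.factorial n) : ℝ) : ℂ) *
        BetaC ((a : ℂ) + Complex.I * (ξ : ℂ) / 2) ((a : ℂ) - Complex.I * (ξ : ℂ) / 2) *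
        F32 n ((n : ℂ) + 2 * (μ : ℂ)) ((a : ℂ) + Complex.I * (ξ : ℂ) / 2)
          (2 * (a : ℂ)) ((μ : ℂ) + 1/2) := by
  set p : ℂ := a - Complex.I * ξ / 2
  set q : ℂ := a + Complex.I * ξ / 2
  have hp : 0 < p.re := by simpa [p] using ha
  have hq : 0 < q.re := by simpa [q] using ha
  set c : ℕ → ℝ := fun l => 2 ^ (2 * a - 1) * (pochR (2 * μ) n / n.factorial *
    (pochR (-(n : ℝ)) l * pochR ((n : ℝ) + 2 * μ) l / (pochR (μ + 1 / 2) l * l.factorial)))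
  have hGeg (u : ℝ) :
      2 ^ (2 * a - 1) * Geg n μ (2 * u - 1) = ∑ l ∈ range (n + 1), c l * (1 - u) ^ l := by
    simp only [c, Geg, mul_sum, show (1 - (2 * u - 1)) / 2 = 1 - u by ring]
    ring_nf
  calc _ = ∫ u in Set.Ioo (0 : ℝ) 1, ∑ l ∈ range (n + 1),
          (c l : ℂ) * ((u : ℂ) ^ (p - 1) * (1 - (u : ℂ)) ^ (q + l - 1)) := by
        rw [integral_eq_setIntegral_Ioo_artanh]
        refine setIntegral_congr_fun measurableSet_Ioo fun u hu => ?_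
        rw [Real.tanh_artanh ⟨by linarith [hu.1], by linarith [hu.2]⟩,
          jacobian_smul_fourierIntegrand_eq hu, hGeg]
        push_cast
        rw [sum_mul]
        refine sum_congr rfl fun l _ => ?_
        rw [show q + l - 1 = q - 1 + l by ring,
          Complex.cpow_add _ _ (one_sub_ofReal_ne_zero hu.2), Complex.cpow_natCast]
        ring
    _ = ∑ l ∈ range (n + 1), (c l : ℂ) * Complex.betaIntegral p (q + l) := by
        rw [integral_finsetSum _ fun l _ =>
          (integrableOn_Ioo_cpow_mul_one_sub_cpow hp (Complex.re_add_natCast_pos hq l)).const_mul _]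
        simp only [integral_const_mul, setIntegral_Ioo_cpow_mul_one_sub_cpow]
    _ = _ := by
        simp only [Complex.betaIntegral_add_nat hp hq, F32, mul_sum, BetaC_comm p q,
          show p + q = 2 * a by ring]
        refine sum_congr rfl fun l _ => ?_
        simp only [c]
        push_cast [ofReal_pochR]
        ring

theorem stmt_4 (a μ : ℝ) (ha : 0 < a) (hμ : -1/2 < μ) (n : ℕ) (ξ : ℝ) :
    ∫ x : ℝ, Complex.exp (-(Complex.I * (ξ : ℂ) * (x : ℂ))) *
        ((((1 - Real.tanh x ^ 2) ^ a) * Geg n μ (Real.tanh x) : ℝ) : ℂ)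
      = ((((2 : ℝ) ^ (2 * a - 1)) * pochR (2 * μ) n / (Nat.factorial n) : ℝ) : ℂ) *
        BetaC ((a : ℂ) + Complex.I * (ξ : ℂ) / 2) ((a : ℂ) - Complex.I * (ξ : ℂ) / 2) *
        F32 n ((n : ℂ) + 2 * (μ : ℂ)) ((a : ℂ) + Complex.I * (ξ : ℂ) / 2)
          (2 * (a : ℂ)) ((μ : ℂ) + 1/2) :=
  stmt_4_general a μ ha n ξ
end
end

section
/- For $a > 0$, $\mu > -1/2$, nonnegative integer $n$, and real $\xi$, one has $\int_{-1}^{1}(1-u)^{a + \frac{i\xi}{2} - 1}(1+u)^{a - \frac{i\xi}{2} - 1} C_n^{(\mu)}(u)\,du = \frac{2^{2a-1}(2\mu)_n}{n!} B\!\left(a+\tfrac{i\xi}{2}, a-\tfrac{i\xi}{2}\right) {}_3F_2\!\left(\begin{smallmatrix} -n,\ n+2\mu,\ a+\frac{i\xi}{2} \\ \mu+\frac12,\ 2a \end{smallmatrix}\;\middle|\;1\right)$. -/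
open MeasureTheory Finset

noncomputable section

/-!
The substitution `u = 2x - 1` turns the weight `(1 - u)^(A-1) (1 + u)^(B-1)` into
`2^(A+B-2) x^(B-1) (1 - x)^(A-1)`, and the `₂F₁` series expresses `C_n^{(μ)}(u)` as a
polynomial in `(1 - u)/2 = 1 - x`. Each power `(1 - x)^l` then contributes the Beta integral
`B(A + l, B) = B(A, B) (A)_l / (A + B)_l`, and with `A + B = 2a` the resulting finite sum
is the `₃F₂`.
-/

lemma pochC_ofReal (r : ℝ) (l : ℕ) : ((pochR r l : ℝ) : ℂ) = pochC r l := by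
  simp [pochR, pochC]

lemma Complex.betaIntegral_add_nat_s5 {A B : ℂ} (hA : 0 < A.re) (hB : 0 < B.re) (l : ℕ) :
    Complex.betaIntegral B (A + l) = BetaC A B * pochC A l / pochC (A + B) l := by
  have hAl : 0 < (A + l).re := by simp; positivity
  have hAB : 0 < (A + B).re := by simp only [Complex.add_re]; positivity
  have hGamma := Complex.Gamma_mul_Gamma_eq_betaIntegral hB hAl
  rw [show B + (A + l) = A + B + l by ring,
    Complex.Gamma_add_nat_eq_pochC_mul (Complex.ne_neg_natCast_of_re_pos hA),
    Complex.Gamma_add_nat_eq_pochC_mul (Complex.ne_neg_natCast_of_re_pos hAB)] at hGamma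
  have hpoch : pochC (A + B) l ≠ 0 := Finset.prod_ne_zero_iff.mpr fun k _ ↦
    add_eq_zero_iff_eq_neg.not.mpr (Complex.ne_neg_natCast_of_re_pos hAB k)
  rw [eq_div_iff hpoch, BetaC, div_mul_eq_mul_div,
    eq_div_iff (Complex.Gamma_ne_zero_of_re_pos hAB)]
  linear_combination -hGamma

lemma Complex.ofReal_cpow_sub_one_mul_pow {t : ℝ} (ht : 0 ≤ t) {w : ℂ} (hw : 0 < w.re)
    (l : ℕ) :
    (t : ℂ) ^ (w - 1) * (t : ℂ) ^ l = (t : ℂ) ^ (w + l - 1) := by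
  rcases ht.eq_or_lt with rfl | ht
  · rcases Nat.eq_zero_or_pos l with rfl | hl
    · simp
    · have hw' : w + l - 1 ≠ 0 := fun h ↦ by
        have := congrArg Complex.re h
        simp at this
        linarith [(Nat.one_le_cast (α := ℝ)).mpr hl]
      simp [zero_pow hl.ne', Complex.zero_cpow hw']
  · rw [← Complex.cpow_natCast, ← Complex.cpow_add _ _ (by exact_mod_cast ht.ne'),
      sub_add_eq_add_sub]

lemma jacobiWeight_mul_pow_comp_two_mul_sub_one {x : ℝ} (hx : x ∈ Set.Icc (0 : ℝ) 1)
    {A : ℂ} (hA : 0 < A.re) (B : ℂ) (l : ℕ) :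
    (1 - ((2 * x + -1 : ℝ) : ℂ)) ^ (A - 1) * (1 + ((2 * x + -1 : ℝ) : ℂ)) ^ (B - 1) *
        ((1 - ((2 * x + -1 : ℝ) : ℂ)) / 2) ^ l
      = 2 ^ (A + B - 2) * ((x : ℂ) ^ (B - 1) * (1 - (x : ℂ)) ^ (A + l - 1)) := by
  obtain ⟨hx0, hx1⟩ := hx
  have hminus : 1 - ((2 * x + -1 : ℝ) : ℂ) = ((2 : ℝ) : ℂ) * ((1 - x : ℝ) : ℂ) := by
    push_cast; ring
  have hplus : 1 + ((2 * x + -1 : ℝ) : ℂ) = ((2 : ℝ) : ℂ) * (x : ℂ) := by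
    push_cast; ring
  have htwo : (2 : ℂ) ^ (A - 1) * 2 ^ (B - 1) = 2 ^ (A + B - 2) := by
    rw [← Complex.cpow_add _ _ two_ne_zero]; ring_nf
  have hpow := Complex.ofReal_cpow_sub_one_mul_pow (sub_nonneg.mpr hx1) hA l
  rw [hminus, hplus, Complex.mul_cpow_ofReal_nonneg zero_le_two (sub_nonneg.mpr hx1),
    Complex.mul_cpow_ofReal_nonneg zero_le_two hx0, ← htwo]
  push_cast at hpow ⊢
  rw [← hpow]
  field_simp

lemma integral_jacobiWeight_mul_sum_pow {A B : ℂ} (hA : 0 < A.re) (hB : 0 < B.re) (N : ℕ)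
    (c : ℕ → ℂ) :
    ∫ u in (-1 : ℝ)..1, (1 - (u : ℂ)) ^ (A - 1) * (1 + (u : ℂ)) ^ (B - 1) *
        ∑ l ∈ range N, c l * ((1 - (u : ℂ)) / 2) ^ l
      = 2 ^ (A + B - 1) * BetaC A B * ∑ l ∈ range N, c l * pochC A l / pochC (A + B) l := by
  set f : ℝ → ℂ := fun u ↦ (1 - (u : ℂ)) ^ (A - 1) * (1 + (u : ℂ)) ^ (B - 1) *
    ∑ l ∈ range N, c l * ((1 - (u : ℂ)) / 2) ^ l
  have hsubst : ∫ u in (-1 : ℝ)..1, f u = 2 * ∫ x in (0 : ℝ)..1, f (2 * x + -1) := by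
    rw [intervalIntegral.integral_comp_mul_add f two_ne_zero, Complex.real_smul]
    norm_num [← mul_assoc]
  have hf : Set.EqOn (fun x ↦ f (2 * x + -1)) (fun x ↦ ∑ l ∈ range N,
      c l * 2 ^ (A + B - 2) * ((x : ℂ) ^ (B - 1) * (1 - (x : ℂ)) ^ (A + l - 1)))
      (Set.uIcc 0 1) := fun x hx ↦ by
    rw [Set.uIcc_of_le zero_le_one] at hx
    simp only [f, Finset.mul_sum]
    refine Finset.sum_congr rfl fun l _ ↦ ?_
    rw [mul_assoc (c l), ← jacobiWeight_mul_pow_comp_two_mul_sub_one hx hA B l]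
    ring
  have hAl (l : ℕ) : 0 < (A + l).re := by simp; positivity
  rw [hsubst, intervalIntegral.integral_congr hf, intervalIntegral.integral_finsetSum
    fun l _ ↦ (Complex.betaIntegral_convergent hB (hAl l)).const_mul _, Finset.mul_sum,
    Finset.mul_sum]
  refine Finset.sum_congr rfl fun l _ ↦ ?_
  rw [intervalIntegral.integral_const_mul, ← Complex.betaIntegral,
    Complex.betaIntegral_add_nat_s5 hA hB,
    show A + B - 1 = 1 + (A + B - 2) by ring, Complex.cpow_add _ _ two_ne_zero, Complex.cpow_one]
  ring

lemma Geg_ofReal_eq_sum (n : ℕ) (μ u : ℝ) :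
    ((Geg n μ u : ℝ) : ℂ) = ∑ l ∈ range (n + 1),
      (((pochR (2 * μ) n / n.factorial * (pochR (-(n : ℝ)) l * pochR ((n : ℝ) + 2 * μ) l /
        (pochR (μ + 1 / 2) l * l.factorial))) : ℝ) : ℂ) * ((1 - (u : ℂ)) / 2) ^ l := by
  simp only [Geg, Finset.mul_sum]
  push_cast
  simp only [mul_assoc]

theorem stmt_5_general (a μ : ℝ) (ha : 0 < a) (n : ℕ) (ξ : ℝ) :
    ∫ u in (-1 : ℝ)..1,
        ((1 : ℂ) - (u : ℂ)) ^ ((a : ℂ) + Complex.I * (ξ : ℂ) / 2 - 1) *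
        ((1 : ℂ) + (u : ℂ)) ^ ((a : ℂ) - Complex.I * (ξ : ℂ) / 2 - 1) *
        ((Geg n μ u : ℝ) : ℂ)
      = ((((2 : ℝ) ^ (2 * a - 1)) * pochR (2 * μ) n / (Nat.factorial n) : ℝ) : ℂ) *
        BetaC ((a : ℂ) + Complex.I * (ξ : ℂ) / 2) ((a : ℂ) - Complex.I * (ξ : ℂ) / 2) *
        F32 n ((n : ℂ) + 2 * (μ : ℂ)) ((a : ℂ) + Complex.I * (ξ : ℂ) / 2)
          ((μ : ℂ) + 1/2) (2 * (a : ℂ)) := by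
  set A : ℂ := (a : ℂ) + Complex.I * (ξ : ℂ) / 2
  set B : ℂ := (a : ℂ) - Complex.I * (ξ : ℂ) / 2
  have hA : 0 < A.re := by simpa [A] using ha
  have hB : 0 < B.re := by simpa [B] using ha
  have hAB : A + B = 2 * (a : ℂ) := by ring
  have htwo : (2 : ℂ) ^ (2 * (a : ℂ) - 1) = ((2 ^ (2 * a - 1) : ℝ) : ℂ) := by
    rw [Complex.ofReal_cpow zero_le_two]
    push_cast
    rfl
  simp_rw [Geg_ofReal_eq_sum]
  rw [integral_jacobiWeight_mul_sum_pow hA hB, hAB, htwo, F32, Finset.mul_sum, Finset.mul_sum]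
  refine Finset.sum_congr rfl fun l _ ↦ ?_
  push_cast [pochC_ofReal]
  ring

theorem stmt_5 (a μ : ℝ) (ha : 0 < a) (hμ : -1/2 < μ) (n : ℕ) (ξ : ℝ) :
    ∫ u in (-1 : ℝ)..1,
        ((1 : ℂ) - (u : ℂ)) ^ ((a : ℂ) + Complex.I * (ξ : ℂ) / 2 - 1) *
        ((1 : ℂ) + (u : ℂ)) ^ ((a : ℂ) - Complex.I * (ξ : ℂ) / 2 - 1) *
        ((Geg n μ u : ℝ) : ℂ)
      = ((((2 : ℝ) ^ (2 * a - 1)) * pochR (2 * μ) n / (Nat.factorial n) : ℝ) : ℂ) *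
        BetaC ((a : ℂ) + Complex.I * (ξ : ℂ) / 2) ((a : ℂ) - Complex.I * (ξ : ℂ) / 2) *
        F32 n ((n : ℂ) + 2 * (μ : ℂ)) ((a : ℂ) + Complex.I * (ξ : ℂ) / 2)
          ((μ : ℂ) + 1/2) (2 * (a : ℂ)) :=
  stmt_5_general a μ ha n ξ
end
end
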